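/- arXiv:2111.02971 — 2 statements merged into one kernel-verified Lean document; each statement's English description precedes it below -/
import Mathlib

section
/- For any strict partition λ with ℓ(λ) = n and any integer p with 1 ≤ p ≤ n, the localization coefficient satisfies 𝔡_{λ,(p)}^{λ} = C(n,p) · 2^{p-1}, where 𝔡_{λ,(p)}^{λ} = |E_{ρ_n}((p))| · 2^{p-1}; equivalently, the number of excited Young diagrams of the single-row partition (p) inside the shifted staircase ρ_n is C(n,p). -/
/-- A strict partition: a strictly decreasing list of positive integers. -/
def IsStrictPartition (l : List ℕ) : Prop :=
  l.Pairwise (· > ·) ∧ ∀ x ∈ l, 0 < x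

/-- The shifted staircase `ρ_n = (n, n-1, …, 2, 1)` as a list. -/
def staircase (n : ℕ) : List ℕ := (List.range n).map (fun i => n - i)

/-- The truncated staircase `ρ_{n,m} = (n, n-1, …, n-m+1)` as a list. -/
def truncStaircase (n m : ℕ) : List ℕ := (List.range m).map (fun i => n - i)

/-- Containment of partitions: `λ ⊆ μ` iff `λ_i ≤ μ_i` for all `i` (padding by zeros). -/
def Contains (lam mu : List ℕ) : Prop := ∀ i, lam.getD i 0 ≤ mu.getD i 0

/-- Cell membership for the shifted Young diagram of `l`
(0-indexed matrix coordinates; row `i` occupies columns `i, …, i + l_i - 1`). -/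
def InShape (l : List ℕ) (p : ℕ × ℕ) : Prop :=
  p.1 ≤ p.2 ∧ p.2 < p.1 + l.getD p.1 0

instance (l : List ℕ) (p : ℕ × ℕ) : Decidable (InShape l p) := by
  unfold InShape; infer_instance

/-- The set of cells of the shifted diagram of `l`. -/
def cells (l : List ℕ) : Set (ℕ × ℕ) := {p | InShape l p}

/-- One excited move on a configuration of `+`'s inside the shifted shape `ν`:
a `+` at `(i,j)` moves to `(i+1,j+1)` provided `(i,j+1)` and `(i+1,j+1)` are
boxes of `ν` unoccupied by `+`'s, and `(i+1,j)` is either not a box of `ν`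
or unoccupied. -/
def ExcitedMove (nu : List ℕ) (D D' : Set (ℕ × ℕ)) : Prop :=
  ∃ i j, (i, j) ∈ D ∧
    InShape nu (i, j + 1) ∧ (i, j + 1) ∉ D ∧
    InShape nu (i + 1, j + 1) ∧ (i + 1, j + 1) ∉ D ∧
    (¬ InShape nu (i + 1, j) ∨ (i + 1, j) ∉ D) ∧
    D' = insert (i + 1, j + 1) (D \ {(i, j)})

/-- The set `E_ν(μ)` of excited Young diagrams of `μ` in `ν`: configurations
reachable from the initial diagram (the cells of `μ`) by excited moves.
By convention it is empty when `μ ⊄ ν`. -/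
def EYD (nu mu : List ℕ) : Set (Set (ℕ × ℕ)) :=
  {D | cells mu ⊆ cells nu ∧ Relation.ReflTransGen (ExcitedMove nu) (cells mu) D}

/-!
An excited diagram of the one-row shape `(p)` inside the staircase `ρ_n` is determined by the
columns of its `p` boxes. A move keeps every box on its diagonal, so the `k`-th box from the
left always lies on diagonal `k`, and a move shifts one box one column to the right into a free
column. Conversely, moving the leftmost box that is not in its initial column one step back is
the reverse of a move, so every choice of `p` columns among `0, …, n-1`, with the `k`-th box on
diagonal `k`, is reachable. Hence there are `C(n,p)` excited diagrams.
-/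

open Finset in
theorem Fin.val_le_val_orderEmbedding {p n : ℕ} (f : Fin p ↪o Fin n) (k : Fin p) :
    (k : ℕ) ≤ f k :=
  calc (k : ℕ) = #(Iio k) := (Fin.card_Iio k).symm
    _ = #((Iio k).map f.toEmbedding) := (card_map _).symm
    _ ≤ #(Iio (f k)) := card_le_card fun x hx => by
      obtain ⟨m, hm, rfl⟩ := mem_map.1 hx
      exact mem_Iio.2 (f.lt_iff_lt.2 (mem_Iio.1 hm))
    _ = f k := Fin.card_Iio _

theorem Fin.val_eq_succ_of_orderEmbedding_eq_succ {p n : ℕ} (f : Fin p ↪o Fin n) {k m : Fin p}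
    (h : (f m : ℕ) = f k + 1) : (m : ℕ) = k + 1 := by
  have hkm : k < m := f.lt_iff_lt.1 (Fin.lt_def.2 (by omega))
  by_contra hne
  let m' : Fin p := ⟨k + 1, by omega⟩
  have h₁ : (f k : ℕ) < f m' := f.lt_iff_lt.2 (Fin.lt_def.2 (Nat.lt_succ_self k))
  have h₂ : (f m' : ℕ) < f m := f.lt_iff_lt.2 (Fin.lt_def.2 (show (k : ℕ) + 1 < m by omega))
  omega

theorem Fin.exists_lt_orderEmbedding_of_ne {p n : ℕ} (f : Fin p ↪o Fin n)
    (h : ∃ k : Fin p, (f k : ℕ) ≠ k) :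
    ∃ k : Fin p, (k : ℕ) < f k ∧ ∀ m < k, (f m : ℕ) = m := by
  obtain ⟨k, hk, hmin⟩ := wellFounded_lt.has_min {k | (f k : ℕ) ≠ k} h
  refine ⟨k, lt_of_le_of_ne (Fin.val_le_val_orderEmbedding f k) (Ne.symm hk), fun m hm => ?_⟩
  by_contra hne
  exact hmin m hne hm

theorem OrderEmbedding.exists_eq_update {α β : Type*} [LinearOrder α] [Preorder β]
    (f : α ↪o β) (k : α) (v : β) (hlt : ∀ m < k, f m < v) (hgt : ∀ m, k < m → v < f m) :
    ∃ g : α ↪o β, g k = v ∧ ∀ m ≠ k, g m = f m := by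
  classical
  have hmono : StrictMono (Function.update f k v) := by
    intro a b hab
    by_cases ha : a = k <;> by_cases hb : b = k
    · exact absurd hab (by rw [ha, hb]; exact lt_irrefl k)
    · simpa [ha, hb] using hgt b (ha ▸ hab)
    · simpa [ha, hb] using hlt a (hb ▸ hab)
    · simpa [ha, hb] using f.strictMono hab
  exact ⟨OrderEmbedding.ofStrictMono _ hmono, by simp, fun m hm => by simp [hm]⟩

theorem inShape_staircase {n i j : ℕ} : InShape (staircase n) (i, j) ↔ i ≤ j ∧ j < n := by
  have hrow : (staircase n).getD i 0 = n - i := by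
    rcases lt_or_ge i n with h | h
    · rw [staircase, List.getD_eq_getElem _ _ (by simpa using h)]
      simp
    · rw [List.getD_eq_default _ _ (by simpa [staircase] using h)]
      omega
  simp only [InShape, hrow]
  omega

theorem inShape_single {p i j : ℕ} : InShape [p] (i, j) ↔ i = 0 ∧ j < p := by
  rcases i with _ | i <;> simp [InShape]

theorem cells_single_subset_staircase_iff {n p : ℕ} :
    cells [p] ⊆ cells (staircase n) ↔ p ≤ n := by
  constructor
  · intro h
    rcases Nat.eq_zero_or_pos p with rfl | hp
    · exact Nat.zero_le n
    · have := inShape_staircase.1 (h (inShape_single.2 ⟨rfl, Nat.sub_lt hp one_pos⟩))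
      omega
  · rintro hpn ⟨i, j⟩ hij
    have := inShape_single.1 hij
    exact inShape_staircase.2 (by omega)

section OneRowDiagram

variable {p n : ℕ}

/-- The `k`-th box sits in column `f k` on diagonal `k`. -/
def oneRowDiagram (f : Fin p ↪o Fin n) : Set (ℕ × ℕ) :=
  Set.range fun k => ((f k : ℕ) - k, (f k : ℕ))

theorem mem_oneRowDiagram {f : Fin p ↪o Fin n} {i j : ℕ} :
    (i, j) ∈ oneRowDiagram f ↔ ∃ k, (f k : ℕ) = j ∧ i + k = j := by
  constructor
  · rintro ⟨k, hk⟩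
    have := Fin.val_le_val_orderEmbedding f k
    simp only [Prod.mk.injEq] at hk
    exact ⟨k, hk.2, by omega⟩
  · rintro ⟨k, hkj, hik⟩
    exact ⟨k, by simp only [Prod.mk.injEq]; omega⟩

theorem oneRowDiagram_injective : Function.Injective (oneRowDiagram (p := p) (n := n)) := by
  intro f g h
  have hcols : Prod.snd '' oneRowDiagram f = Prod.snd '' oneRowDiagram g := by rw [h]
  simp only [oneRowDiagram, ← Set.range_comp] at hcols
  rw [← OrderEmbedding.range_inj]
  apply Set.image_injective.2 Fin.val_injective
  rw [← Set.range_comp, ← Set.range_comp]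
  exact hcols

theorem cells_single_eq_oneRowDiagram {f : Fin p ↪o Fin n} (hf : ∀ k, (f k : ℕ) = k) :
    cells [p] = oneRowDiagram f := by
  ext ⟨i, j⟩
  rw [cells, Set.mem_ofPred_eq, inShape_single, mem_oneRowDiagram]
  constructor
  · rintro ⟨rfl, hj⟩
    exact ⟨⟨j, hj⟩, hf _, by simp⟩
  · rintro ⟨k, hkj, hik⟩
    have := hf k
    exact ⟨by omega, by omega⟩

theorem oneRowDiagram_eq_insert_diff {f g : Fin p ↪o Fin n} {k : Fin p} {i j : ℕ}
    (hfk : (f k : ℕ) = j) (hik : i + k = j) (hgk : (g k : ℕ) = j + 1)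
    (hg : ∀ m ≠ k, g m = f m) :
    oneRowDiagram g = insert (i + 1, j + 1) (oneRowDiagram f \ {(i, j)}) := by
  ext ⟨a, b⟩
  simp only [Set.mem_insert_iff, Set.mem_sdiff, Set.mem_singleton_iff, Prod.mk.injEq,
    mem_oneRowDiagram]
  constructor
  · rintro ⟨m, hmb, ham⟩
    by_cases hm : m = k
    · subst hm
      left
      omega
    · rw [hg m hm] at hmb
      refine Or.inr ⟨⟨m, hmb, ham⟩, fun ⟨hai, hbj⟩ => hm (f.injective (Fin.ext ?_))⟩
      omega
  · rintro (⟨rfl, rfl⟩ | ⟨⟨m, hmb, ham⟩, hne⟩)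
    · exact ⟨k, hgk, by omega⟩
    · have hm : m ≠ k := by
        rintro rfl
        exact hne ⟨by omega, by omega⟩
      exact ⟨m, by rw [hg m hm, hmb], ham⟩

theorem exists_oneRowDiagram_of_excitedMove {f : Fin p ↪o Fin n} {D : Set (ℕ × ℕ)}
    (h : ExcitedMove (staircase n) (oneRowDiagram f) D) :
    ∃ g : Fin p ↪o Fin n, D = oneRowDiagram g := by
  obtain ⟨i, j, hij, -, hright, hbox, -, -, rfl⟩ := h
  obtain ⟨k, hkj, hik⟩ := mem_oneRowDiagram.1 hij
  have hj : j + 1 < n := (inShape_staircase.1 hbox).2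
  -- a box in column `j + 1` would be the `(k + 1)`-th one, hence in row `i`
  have hfree : ∀ m, (f m : ℕ) ≠ j + 1 := by
    intro m hm
    have := Fin.val_eq_succ_of_orderEmbedding_eq_succ f (k := k) (m := m) (by omega)
    exact hright (mem_oneRowDiagram.2 ⟨m, hm, by omega⟩)
  obtain ⟨g, hgk, hg⟩ := f.exists_eq_update k ⟨j + 1, hj⟩
    (fun m hm => by
      have := Fin.lt_def.1 (f.lt_iff_lt.2 hm)
      show (f m : ℕ) < j + 1
      omega)
    (fun m hm => by
      have := Fin.lt_def.1 (f.lt_iff_lt.2 hm)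
      have := hfree m
      show j + 1 < (f m : ℕ)
      omega)
  exact ⟨g, (oneRowDiagram_eq_insert_diff hkj hik (by rw [hgk]) hg).symm⟩

theorem exists_excitedMove_to_oneRowDiagram {f : Fin p ↪o Fin n} {k : Fin p}
    (hk : (k : ℕ) < f k) (hmin : ∀ m < k, (f m : ℕ) = m) :
    ∃ g : Fin p ↪o Fin n, ∑ m, (g m : ℕ) < ∑ m, (f m : ℕ) ∧
      ExcitedMove (staircase n) (oneRowDiagram g) (oneRowDiagram f) := by
  obtain ⟨g, hgk, hg⟩ := f.exists_eq_update k ⟨f k - 1, by omega⟩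
    (fun m hm => by
      have := hmin m hm
      have := Fin.lt_def.1 hm
      show (f m : ℕ) < f k - 1
      omega)
    (fun m hm => by
      have := Fin.lt_def.1 (f.lt_iff_lt.2 hm)
      show (f k : ℕ) - 1 < f m
      omega)
  have hgk' : (g k : ℕ) = f k - 1 := by rw [hgk]
  have hfree : ∀ m, (g m : ℕ) ≠ f k := by
    intro m hm
    by_cases hmk : m = k
    · subst hmk; omega
    · rw [hg m hmk] at hm
      exact hmk (f.injective (Fin.ext hm))
  have hsum : ∑ m, (g m : ℕ) < ∑ m, (f m : ℕ) :=
    Finset.sum_lt_sum (fun m _ => by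
        rcases eq_or_ne m k with rfl | hmk
        · omega
        · rw [hg m hmk]) ⟨k, Finset.mem_univ _, by omega⟩
  refine ⟨g, hsum, f k - 1 - k, f k - 1, ?_, ?_, ?_, ?_, ?_, ?_, ?_⟩
  · exact mem_oneRowDiagram.2 ⟨k, hgk', by omega⟩
  · exact inShape_staircase.2 (by omega)
  · rintro ⟨m, hm⟩
    exact hfree m (by simp only [Prod.mk.injEq] at hm; omega)
  · exact inShape_staircase.2 (by omega)
  · rintro ⟨m, hm⟩
    exact hfree m (by simp only [Prod.mk.injEq] at hm; omega)
  · right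
    intro hmem
    obtain ⟨m, hm, hrow⟩ := mem_oneRowDiagram.1 hmem
    have : m = k := g.injective (Fin.ext (by omega))
    subst this
    omega
  · exact oneRowDiagram_eq_insert_diff hgk' (by omega) (by omega) (fun m hm => (hg m hm).symm)

theorem reflTransGen_excitedMove_oneRowDiagram (f : Fin p ↪o Fin n) :
    Relation.ReflTransGen (ExcitedMove (staircase n)) (cells [p]) (oneRowDiagram f) := by
  induction f using (measure fun f : Fin p ↪o Fin n => ∑ m, (f m : ℕ)).wf.induction with
  | _ f ih =>
  by_cases hid : ∀ k, (f k : ℕ) = k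
  · rw [cells_single_eq_oneRowDiagram hid]
  · push Not at hid
    obtain ⟨k, hk, hmin⟩ := Fin.exists_lt_orderEmbedding_of_ne f hid
    obtain ⟨g, hlt, hmove⟩ := exists_excitedMove_to_oneRowDiagram hk hmin
    exact (ih g hlt).tail hmove

theorem eyd_staircase_eq_range_oneRowDiagram :
    EYD (staircase n) [p] = Set.range (oneRowDiagram (p := p) (n := n)) := by
  ext D
  constructor
  · rintro ⟨hsub, hreach⟩
    have hpn := cells_single_subset_staircase_iff.1 hsub
    rw [cells_single_eq_oneRowDiagram (f := Fin.castLEOrderEmb hpn) fun _ => rfl] at hreach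
    induction hreach with
    | refl => exact ⟨_, rfl⟩
    | tail _ hmove ih =>
      obtain ⟨f, rfl⟩ := ih
      obtain ⟨g, rfl⟩ := exists_oneRowDiagram_of_excitedMove hmove
      exact ⟨g, rfl⟩
  · rintro ⟨f, rfl⟩
    exact ⟨cells_single_subset_staircase_iff.2 (Fin.le_of_embedding f.toEmbedding),
      reflTransGen_excitedMove_oneRowDiagram f⟩

end OneRowDiagram

theorem eyd_one_row_count_general (n p : ℕ) :
    Set.ncard (EYD (staircase n) [p]) = n.choose p ∧
    Set.ncard (EYD (staircase n) [p]) * 2 ^ (p - 1) = n.choose p * 2 ^ (p - 1) := by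
  have hcount : Set.ncard (EYD (staircase n) [p]) = n.choose p := by
    rw [eyd_staircase_eq_range_oneRowDiagram, Set.ncard_range_of_injective oneRowDiagram_injective,
      Nat.card_congr Set.powersetCard.ofFinEmbEquiv, Set.powersetCard.card, Nat.card_fin]
  exact ⟨hcount, by rw [hcount]⟩

/-- For a strict partition `λ` with `n` parts and `1 ≤ p ≤ n`, the number of
excited Young diagrams of the one-row partition `(p)` inside `ρ_n` is `C(n,p)`;
hence `𝔡_{λ,(p)}^{λ} = |E_{ρ_n}((p))| · 2^{p-1} = C(n,p) · 2^{p-1}`. -/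
theorem eyd_one_row_count (n p : ℕ) (hp : 1 ≤ p) (hpn : p ≤ n) :
    Set.ncard (EYD (staircase n) [p]) = n.choose p ∧
    Set.ncard (EYD (staircase n) [p]) * 2 ^ (p - 1) = n.choose p * 2 ^ (p - 1) :=
  eyd_one_row_count_general n p
end

section
/- Fix n ≥ 1 and consider the process of choosing, for i = 1, ..., n-1 in order, either to move the minimum label of edge i to edge i+1 or to do nothing, starting from the configuration where edge i holds the single label i (for labels 1,...,n on n edges). All 2^{n-1} resulting label configurations of labels [n] on the n edges are pairwise distinct. -/
/-- One optional step: move the minimum label of edge `i` to edge `i+1`. -/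
def moveMinStep (c : ℕ → Finset ℕ) (i : ℕ) : ℕ → Finset ℕ :=
  if h : (c i).Nonempty then
    fun j =>
      if j = i then (c i).erase ((c i).min' h)
      else if j = i + 1 then insert ((c i).min' h) (c (i + 1))
      else c j
  else c

/-- The initial configuration: edge `i` (0-indexed) holds the single label `i+1`. -/
def initialConfig (n : ℕ) : ℕ → Finset ℕ := fun i => if i < n then {i + 1} else ∅

/-- The final configuration after processing edges `1, …, n-1` in order,
moving the minimum of edge `i` to edge `i+1` exactly when `b i = true`. -/
def finalConfig (n : ℕ) (b : ℕ → Bool) : ℕ → Finset ℕ :=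
  (List.range (n - 1)).foldl (fun c i => if b i then moveMinStep c i else c)
    (initialConfig n)

def stateAt (n : ℕ) (b : ℕ → Bool) : ℕ → (ℕ → Finset ℕ)
  | 0 => initialConfig n
  | k + 1 => if b k then moveMinStep (stateAt n b k) k else stateAt n b k

lemma finalConfig_eq_stateAt (n : ℕ) (b : ℕ → Bool) :
    finalConfig n b = stateAt n b (n - 1) := by
  suffices h : ∀ m, (List.range m).foldl
      (fun c i => if b i then moveMinStep c i else c) (initialConfig n) = stateAt n b m by
    exact h (n - 1)
  intro m
  induction m with
  | zero => rfl
  | succ k ih =>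
    rw [List.range_succ, List.foldl_append, ih]
    rfl

lemma moveMinStep_apply_ne (c : ℕ → Finset ℕ) (i j : ℕ) (h1 : j ≠ i) (h2 : j ≠ i + 1) :
    moveMinStep c i j = c j := by
  unfold moveMinStep
  split
  · simp [h1, h2]
  · rfl

lemma main_inv (n : ℕ) (b : ℕ → Bool) (hn : 1 ≤ n) :
    ∀ k, k ≤ n - 1 →
    (∀ j, k < j → stateAt n b k j = initialConfig n j) ∧
    (k + 1 ∈ stateAt n b k k) ∧
    (∑ j ∈ Finset.range (k + 1), (stateAt n b k j).card = k + 1) ∧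
    (∀ i, i < k → ∑ j ∈ Finset.range (i + 1), (stateAt n b k j).card
        = if b i then i else i + 1) := by
  intro k
  induction k with
  | zero =>
    intro _
    refine ⟨fun j hj => rfl, ?_, ?_, fun i hi => absurd hi (Nat.not_lt_zero i)⟩
    · have h0 : 0 < n := hn
      show 1 ∈ initialConfig n 0
      simp [initialConfig, h0]
    · have h0 : 0 < n := hn
      show (initialConfig n 0).card = 1
      simp [initialConfig, h0]
  | succ k ih =>
    intro hk
    have hk' : k ≤ n - 1 := Nat.le_of_succ_le hk
    obtain ⟨ha, hb, hc, hd⟩ := ih hk'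
    have hkn : k + 1 < n := by omega
    set s := stateAt n b k with hs
    have hne : (s k).Nonempty := ⟨k + 1, hb⟩
    have hmin : (s k).min' hne ≤ k + 1 := Finset.min'_le _ _ hb
    have hsk1 : s (k + 1) = {k + 2} := by
      rw [ha (k + 1) (Nat.lt_succ_self k)]
      simp [initialConfig, hkn]
    have hcardk : 1 ≤ (s k).card := Finset.card_pos.mpr hne
    have hsumk : ∑ j ∈ Finset.range k, (s j).card = k + 1 - (s k).card := by
      have := hc
      rw [Finset.sum_range_succ] at this
      omega
    by_cases hbk : b k
    · have hstate : stateAt n b (k + 1) = moveMinStep s k := by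
        simp [stateAt, hbk, hs]
      have happk : stateAt n b (k + 1) k = (s k).erase ((s k).min' hne) := by
        rw [hstate]; simp [moveMinStep, hne]
      have happk1 : stateAt n b (k + 1) (k + 1) = insert ((s k).min' hne) (s (k + 1)) := by
        rw [hstate]; simp [moveMinStep, hne]
      have happ_other : ∀ j, j ≠ k → j ≠ k + 1 → stateAt n b (k + 1) j = s j := by
        intro j h1 h2
        rw [hstate]; exact moveMinStep_apply_ne s k j h1 h2
      have herase_card : ((s k).erase ((s k).min' hne)).card = (s k).card - 1 :=
        Finset.card_erase_of_mem (Finset.min'_mem _ _)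
      have hmin_ne : (s k).min' hne ∉ s (k + 1) := by
        rw [hsk1]
        simp only [Finset.mem_singleton]
        omega
      have hins_card : (insert ((s k).min' hne) (s (k + 1))).card = 2 := by
        rw [Finset.card_insert_of_notMem hmin_ne, hsk1]
        simp
      have hsum_small : ∀ i, i ≤ k → ∑ j ∈ Finset.range (i + 1), (stateAt n b (k + 1) j).card
          = ∑ j ∈ Finset.range (i + 1), (s j).card - (if i = k then 1 else 0) := by
        intro i hi
        by_cases hik : i = k
        · subst hik
          rw [Finset.sum_range_succ, Finset.sum_range_succ, happk, herase_card]
          have heq : ∀ j ∈ Finset.range i, (stateAt n b (i + 1) j).card = (s j).card := by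
            intro j hj
            rw [happ_other j (by simp at hj; omega) (by simp at hj; omega)]
          rw [Finset.sum_congr rfl heq]
          simp
          omega
        · have heq : ∀ j ∈ Finset.range (i + 1), (stateAt n b (k + 1) j).card = (s j).card := by
            intro j hj
            simp only [Finset.mem_range] at hj
            rw [happ_other j (by omega) (by omega)]
          rw [Finset.sum_congr rfl heq]
          simp [hik]
      refine ⟨?_, ?_, ?_, ?_⟩
      · intro j hj
        rw [happ_other j (by omega) (by omega)]
        exact ha j (by omega)
      · rw [happk1, hsk1]
        simp
      · rw [Finset.sum_range_succ, happk1, hins_card, hsum_small k le_rfl, hc]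
        simp
      · intro i hi
        rcases Nat.lt_succ_iff_lt_or_eq.mp hi with hi' | hi'
        · rw [hsum_small i (by omega), hd i hi']
          simp [Nat.ne_of_lt hi']
        · subst hi'
          rw [hsum_small i le_rfl, hc]
          simp [hbk]
    · have hstate : stateAt n b (k + 1) = s := by
        simp [stateAt, hbk, hs]
      rw [hstate]
      refine ⟨fun j hj => ha j (by omega), ?_, ?_, ?_⟩
      · rw [hsk1]; simp
      · rw [Finset.sum_range_succ, hc, hsk1]
        simp
      · intro i hi
        rcases Nat.lt_succ_iff_lt_or_eq.mp hi with hi' | hi'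
        · exact hd i hi'
        · subst hi'
          rw [hc]
          simp [hbk]

lemma card_sum_eq (n : ℕ) (b : ℕ → Bool) (hn : 1 ≤ n) (i : ℕ) (hi : i < n - 1) :
    ∑ j ∈ Finset.range (i + 1), (finalConfig n b j).card = if b i then i else i + 1 := by
  rw [finalConfig_eq_stateAt]
  exact (main_inv n b hn (n - 1) le_rfl).2.2.2 i hi

/-- The `2^{n-1}` resulting configurations are pairwise distinct: the map from
choice sequences to final configurations is injective. -/
theorem finalConfig_injective (n : ℕ) (hn : 1 ≤ n) (b₁ b₂ : ℕ → Bool)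
    (h₁ : ∀ i, n - 1 ≤ i → b₁ i = false) (h₂ : ∀ i, n - 1 ≤ i → b₂ i = false)
    (h : finalConfig n b₁ = finalConfig n b₂) : b₁ = b₂ := by
  funext i
  by_cases hi : i < n - 1
  · have e1 := card_sum_eq n b₁ hn i hi
    have e2 := card_sum_eq n b₂ hn i hi
    rw [h] at e1
    rw [e2] at e1
    cases hb1 : b₁ i <;> cases hb2 : b₂ i <;> simp_all <;> omega
  · rw [h₁ i (by omega), h₂ i (by omega)]
end
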